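/- Let X ∼ F_X and suppose F_X jumps at x_0, i.e., P(X = x_0) = F_X(x_0) − F_X(x_0−) > 0, and let T be pcsm on the support of F_X. Let 𝒲_g be the generalised W-transform of F_X and T. Then 𝒲_g is affine on the interval (F_X(x_0−), F_X(x_0)), given there by 𝒲_g(u) = [(F_{T(X)}(T(x_0)) − F_{T(X)}(T(x_0)−))/(F_X(x_0) − F_X(x_0−))] (u − F_X(x_0−)) + F_{T(X)}(T(x_0)−). Moreover, if x_0, …, x_L are exactly the jump points of F_X mapped by T to the same value s = T(x_0), then F_{T(X)}(s) − F_{T(X)}(s−) = Σ_{ℓ=0}^L P(X = x_ℓ), so the slope of the linear piece of 𝒲_g on (F_X(x_ℓ−), F_X(x_ℓ)) equals (Σ_{ℓ′=0}^L P(X = x_{ℓ′}))/P(X = x_ℓ) for each ℓ ∈ {0,…,L}. -/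

import Mathlib

/-! On the jump interval `(F_X(x₀−), F_X(x₀))` every `u` equals `F_X(x₀, v)` for
`v = (u - F_X(x₀−)) / P(X = x₀) ∈ (0, 1)`, and `𝒲_g(u) = F_{T(X)}(T(x₀), v)` is affine
in `v`. For the slope, `P(T(X) = s)` is the `F_X`-mass of the fibre `T⁻¹{s}`. The law of `X`
lives on its support, which lies in `[t₀, t_K]`, i.e. on the finitely many change points and
the open pieces. `T` is continuous on the pieces, so `T(X)` is a random variable, and injective
on each of them, so the fibre meets the support in a countable set, whose mass is carried by
its atoms `x₀, …, x_L`. -/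

open MeasureTheory Set

/-- The distribution function of a measure on `ℝ`. -/
noncomputable def distFun (μ : Measure ℝ) : ℝ → ℝ := fun x => (μ (Set.Iic x)).toReal

/-- The left limit `F(x-) = P(X < x)` of the distribution function of `μ`. -/
noncomputable def distFunLeft (μ : Measure ℝ) : ℝ → ℝ := fun x => (μ (Set.Iio x)).toReal

/-- The modified distribution function `F(x, v) = P(X < x) + v P(X = x)`. -/
noncomputable def modDistFun (μ : Measure ℝ) : ℝ → ℝ → ℝ :=
  fun x v => (μ (Set.Iio x)).toReal + v * (μ {x}).toReal

/-- The support of a distribution function `F`. -/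
def suppSet (F : ℝ → ℝ) : Set ℝ := {x : ℝ | ∀ h > 0, 0 < F x - F (x - h)}

/-- The `k`-th open piece `(t_{k-1}, t_k)`. -/
def pieceO (t : ℕ → EReal) (k : ℕ) : Set ℝ :=
  {x : ℝ | t (k - 1) < (x : EReal) ∧ (x : EReal) < t k}

open Filter Topology

section DistributionFunction

variable (μ : Measure ℝ) [IsFiniteMeasure μ]

lemma distFun_sub_distFunLeft (x : ℝ) : distFun μ x - distFunLeft μ x = (μ {x}).toReal := by
  simp only [distFun, distFunLeft, ← measureReal_def]
  rw [← measureReal_sdiff Iio_subset_Iic_self measurableSet_Iio, Iic_sdiff_Iio_same]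

lemma modDistFun_eq (x v : ℝ) :
    modDistFun μ x v = distFunLeft μ x + v * (distFun μ x - distFunLeft μ x) := by
  rw [distFun_sub_distFunLeft]
  rfl

lemma mem_suppSet_distFun_iff {x : ℝ} :
    x ∈ suppSet (distFun μ) ↔ ∀ h > 0, μ (Ioc (x - h) x) ≠ 0 := by
  refine forall₂_congr fun h hh => ?_
  rw [distFun, distFun, ← measureReal_def, ← measureReal_def,
    ← measureReal_sdiff (Iic_subset_Iic.2 (by linarith)) measurableSet_Iic, Iic_sdiff_Iic,
    measureReal_def, ENNReal.toReal_pos_iff, pos_iff_ne_zero]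
  simp [measure_lt_top]

lemma measure_compl_suppSet_distFun : μ (suppSet (distFun μ))ᶜ = 0 := by
  -- A point outside `suppSet` lies off `μ.support`, a null set, or is isolated from the left
  -- in `μ.support`; there are only countably many of the latter, each without mass.
  set S := μ.support
  have hisolated : ∀ x ∉ suppSet (distFun μ), 𝓝[S ∩ Iio x] x = ⊥ ∧ μ {x} = 0 := by
    intro x hx
    obtain ⟨h, hh, hnull⟩ : ∃ h > 0, μ (Ioc (x - h) x) = 0 := by
      simpa [mem_suppSet_distFun_iff] using hx
    have hIoo : Ioo (x - h) x ⊆ Sᶜ := Measure.subset_compl_support_of_isOpen isOpen_Ioo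
      (measure_mono_null Ioo_subset_Ioc_self hnull)
    have hxh : x - h < x := by linarith
    refine ⟨inf_principal_eq_bot.2 (mem_of_superset (Ioi_mem_nhds hxh) ?_),
      measure_mono_null (by simpa using hh) hnull⟩
    rintro y hy ⟨hyS, hyx⟩
    exact hIoo ⟨hy, hyx⟩ hyS
  have hsub : (suppSet (distFun μ))ᶜ ⊆
      Sᶜ ∪ {x | x ∈ S ∧ 𝓝[S ∩ Iio x] x = ⊥} ∩ {x | μ {x} = 0} := by
    intro x hx
    by_cases hxS : x ∈ S
    · exact Or.inr ⟨⟨hxS, (hisolated x hx).1⟩, (hisolated x hx).2⟩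
    · exact Or.inl hxS
  refine measure_mono_null hsub (measure_union_null Measure.measure_compl_support ?_)
  exact (measure_null_iff_singleton (countable_setOfPred_isolated_left_within.mono
    inter_subset_left)).2 fun x hx => hx.2

end DistributionFunction

theorem wTransform_eq_of_mem_Ioo_jump (μ ν : Measure ℝ) [IsFiniteMeasure μ]
    [IsFiniteMeasure ν] {T Wg : ℝ → ℝ}
    (hWg : ∀ x : ℝ, ∀ v ∈ Icc (0 : ℝ) 1, 0 < modDistFun μ x v →
      Wg (modDistFun μ x v) = modDistFun ν (T x) v)
    {x₀ : ℝ} (hx₀ : 0 < (μ {x₀}).toReal) {u : ℝ}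
    (hu : u ∈ Ioo (distFunLeft μ x₀) (distFun μ x₀)) :
    Wg u = ((distFun ν (T x₀) - distFunLeft ν (T x₀))
          / (distFun μ x₀ - distFunLeft μ x₀)) * (u - distFunLeft μ x₀)
        + distFunLeft ν (T x₀) := by
  have hjump := distFun_sub_distFunLeft μ x₀
  set a := distFunLeft μ x₀
  set p := (μ {x₀}).toReal
  have hu₂ : u - a < p := by linarith [hu.2]
  set v := (u - a) / p
  have hv : v ∈ Icc (0 : ℝ) 1 :=
    ⟨div_nonneg (by linarith [hu.1]) hx₀.le, (div_le_one hx₀).2 hu₂.le⟩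
  have hmod : modDistFun μ x₀ v = u := by
    rw [modDistFun_eq, hjump]
    simp only [v, div_mul_cancel₀ _ hx₀.ne']
    ring
  have ha : 0 ≤ a := ENNReal.toReal_nonneg
  have hpos : 0 < modDistFun μ x₀ v := by
    rw [hmod]
    linarith [hu.1]
  rw [← hmod, hWg x₀ v hv hpos, modDistFun_eq, hmod, hjump]
  ring

section Pieces

variable (t : ℕ → EReal) (K : ℕ)

def changePoints : Set ℝ := {y | ∃ k ≤ K, (y : EReal) = t k}

def pieces : Set ℝ := ⋃ k ∈ Icc 1 K, pieceO t k

lemma changePoints_countable : (changePoints t K).Countable := by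
  refine ((finite_Iic K).countable.biUnion fun k _ => ?_).mono
    (fun y ⟨k, hk, hy⟩ => mem_biUnion (mem_Iic.2 hk) hy)
  exact Subsingleton.countable fun a ha b hb => EReal.coe_injective (ha.trans hb.symm)

lemma isOpen_pieceO (k : ℕ) : IsOpen (pieceO t k) :=
  isOpen_Ioo.preimage continuous_coe_real_ereal

lemma isOpen_pieces : IsOpen (pieces t K) :=
  isOpen_biUnion fun k _ => isOpen_pieceO t k

lemma mem_changePoints_union_pieces {y : ℝ} (h0 : t 0 ≤ y) (hK : (y : EReal) ≤ t K) :
    y ∈ changePoints t K ∪ pieces t K := by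
  classical
  have hex : ∃ k, (y : EReal) ≤ t k := ⟨K, hK⟩
  have hkK : Nat.find hex ≤ K := Nat.find_min' hex hK
  rcases (Nat.find_spec hex).eq_or_lt with hy | hy
  · exact Or.inl ⟨_, hkK, hy⟩
  · have hk : Nat.find hex ≠ 0 := fun h => (h0.trans_lt (h ▸ hy)).false
    have hlt : t (Nat.find hex - 1) < y := not_le.1 (Nat.find_min hex (by omega))
    exact Or.inr (mem_biUnion (mem_Icc.2 ⟨by omega, hkK⟩) ⟨hlt, hy⟩)

variable {t K} {T : ℝ → ℝ}

lemma continuousOn_pieces (hT : ∀ k, 1 ≤ k → k ≤ K → ContinuousOn T (pieceO t k)) :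
    ContinuousOn T (pieces t K) := by
  refine (isOpen_pieces t K).continuousOn_iff.2 fun y hy => ?_
  obtain ⟨k, hk, hyk⟩ := mem_iUnion₂.1 hy
  exact (hT k hk.1 hk.2).continuousAt ((isOpen_pieceO t k).mem_nhds hyk)

lemma countable_preimage_singleton_inter_changePoints_union_pieces
    (hT : ∀ k, 1 ≤ k → k ≤ K → InjOn T (pieceO t k)) (s : ℝ) :
    (T ⁻¹' {s} ∩ (changePoints t K ∪ pieces t K)).Countable := by
  have hfiber : (T ⁻¹' {s} ∩ pieces t K).Countable := by
    simp only [pieces, inter_iUnion₂]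
    refine (finite_Icc 1 K).countable.biUnion fun k hk => Subsingleton.countable ?_
    rintro y ⟨hys, hy⟩ z ⟨hzs, hz⟩
    exact hT k hk.1 hk.2 hy hz (hys.trans hzs.symm)
  refine ((changePoints_countable t K).union hfiber).mono ?_
  rintro y ⟨hys, hyC | hyU⟩
  exacts [Or.inl hyC, Or.inr ⟨hys, hyU⟩]

lemma measure_compl_changePoints_union_pieces (μ : Measure ℝ) [IsFiniteMeasure μ]
    (h0 : t 0 ≤ sInf ((fun x : ℝ => (x : EReal)) '' suppSet (distFun μ)))
    (hK : sSup ((fun x : ℝ => (x : EReal)) '' suppSet (distFun μ)) ≤ t K) :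
    μ (changePoints t K ∪ pieces t K)ᶜ = 0 := by
  refine measure_mono_null (compl_subset_compl.2 fun y hy => ?_) (measure_compl_suppSet_distFun μ)
  exact mem_changePoints_union_pieces t K (h0.trans (sInf_le (mem_image_of_mem _ hy)))
    ((le_sSup (mem_image_of_mem _ hy)).trans hK)

end Pieces

lemma aemeasurable_of_continuousOn_of_countable {α β : Type*} [TopologicalSpace α]
    [MeasurableSpace α] [OpensMeasurableSpace α] [MeasurableSingletonClass α]
    [TopologicalSpace β] [MeasurableSpace β] [BorelSpace β] {μ : Measure α} {f : α → β}
    {C U : Set α} (hC : C.Countable) (hU : MeasurableSet U) (hf : ContinuousOn f U)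
    (hcover : μ (C ∪ U)ᶜ = 0) : AEMeasurable f μ := by
  rw [← Measure.restrict_eq_self_of_ae_mem (s := C ∪ U) (mem_ae_iff.2 hcover),
    aemeasurable_union_iff]
  refine ⟨?_, hf.aemeasurable hU⟩
  have := hC.to_subtype
  rw [← biUnion_of_singleton C, biUnion_eq_iUnion, aemeasurable_iUnion_iff]
  intro c
  refine (aemeasurable_const (b := f c)).congr ?_
  filter_upwards [ae_restrict_mem (measurableSet_singleton (c : α))] with x hx
  rw [hx]

lemma measure_eq_of_subset_of_diff_atoms_null {α : Type*} [MeasurableSpace α] {μ : Measure α}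
    {A R D : Set α} (hD : μ Dᶜ = 0) (hAD : (A ∩ D).Countable) (hRA : R ⊆ A)
    (hatoms : ∀ y ∈ A \ R, μ {y} = 0) : μ A = μ R := by
  have hdiff : μ ((A ∩ D) \ R) = 0 :=
    (measure_null_iff_singleton (hAD.mono sdiff_subset)).2 fun y hy => hatoms y ⟨hy.1.1, hy.2⟩
  refine measure_congr (ae_eq_set.2 ⟨measure_mono_null ?_ (measure_union_null hdiff hD), by
    simp [sdiff_eq_empty.2 hRA]⟩)
  intro y hy
  by_cases hyD : y ∈ D
  exacts [Or.inl ⟨⟨hy.1, hyD⟩, hy.2⟩, Or.inr hyD]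

theorem generalised_w_transform_linear_on_jumps_general
    {Ω : Type*} [MeasurableSpace Ω] (P : Measure Ω) [IsProbabilityMeasure P]
    (X : Ω → ℝ) (hX : Measurable X)
    (T : ℝ → ℝ)
    -- `T` is pcsm on the support of `F_X`
    (K : ℕ) (t : ℕ → EReal)
    (hTcont : ∀ k : ℕ, 1 ≤ k → k ≤ K → ContinuousOn T (pieceO t k))
    (hTmono : ∀ k : ℕ, 1 ≤ k → k ≤ K →
      StrictMonoOn T (pieceO t k) ∨ StrictAntiOn T (pieceO t k))
    (hsupp0 : sInf ((fun x : ℝ => (x : EReal)) '' suppSet (distFun (P.map X))) = t 0)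
    (hsuppK : sSup ((fun x : ℝ => (x : EReal)) '' suppSet (distFun (P.map X))) = t K)
    -- the generalised W-transform `𝒲_g` of `F_X` and `T`
    (Wg : ℝ → ℝ)
    (hWg : ∀ x : ℝ, ∀ v ∈ Set.Icc (0 : ℝ) 1, 0 < modDistFun (P.map X) x v →
      Wg (modDistFun (P.map X) x v)
        = modDistFun (P.map (fun ω => T (X ω))) (T x) v)
    -- `F_X` jumps at `x₀`
    (x₀ : ℝ) (hx₀ : 0 < ((P.map X) {x₀}).toReal) :
    -- `𝒲_g` is affine on `(F_X(x₀−), F_X(x₀))`, with the explicit formula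
    (∀ u ∈ Set.Ioo (distFunLeft (P.map X) x₀) (distFun (P.map X) x₀),
      Wg u = ((distFun (P.map (fun ω => T (X ω))) (T x₀)
                - distFunLeft (P.map (fun ω => T (X ω))) (T x₀))
              / (distFun (P.map X) x₀ - distFunLeft (P.map X) x₀))
            * (u - distFunLeft (P.map X) x₀)
          + distFunLeft (P.map (fun ω => T (X ω))) (T x₀)) ∧
    -- the multi-jump statement
    (∀ L : ℕ, ∀ x : Fin (L + 1) → ℝ, x 0 = x₀ → Function.Injective x →
      (∀ ℓ, 0 < ((P.map X) {x ℓ}).toReal) →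
      (∀ ℓ, T (x ℓ) = T x₀) →
      (∀ y : ℝ, 0 < ((P.map X) {y}).toReal → T y = T x₀ → ∃ ℓ, y = x ℓ) →
      (((P.map (fun ω => T (X ω))) {T x₀}).toReal
          = ∑ ℓ : Fin (L + 1), ((P.map X) {x ℓ}).toReal) ∧
      ∀ ℓ : Fin (L + 1),
        ∀ u₁ ∈ Set.Ioo (distFunLeft (P.map X) (x ℓ)) (distFun (P.map X) (x ℓ)),
        ∀ u₂ ∈ Set.Ioo (distFunLeft (P.map X) (x ℓ)) (distFun (P.map X) (x ℓ)),
          Wg u₂ - Wg u₁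
            = ((∑ ℓ' : Fin (L + 1), ((P.map X) {x ℓ'}).toReal)
                / ((P.map X) {x ℓ}).toReal) * (u₂ - u₁)) := by
  set μ := P.map X
  have hcover := measure_compl_changePoints_union_pieces μ hsupp0.ge hsuppK.le
  have hT : AEMeasurable T μ := aemeasurable_of_continuousOn_of_countable
    (changePoints_countable t K) (isOpen_pieces t K).measurableSet (continuousOn_pieces hTcont)
    hcover
  have hmap : P.map (fun ω => T (X ω)) = μ.map T :=
    (hT.map_map_of_aemeasurable hX.aemeasurable).symm
  refine ⟨fun u hu => wTransform_eq_of_mem_Ioo_jump _ _ hWg hx₀ hu, ?_⟩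
  intro L x _ hinj hatom hTx hexact
  have hfiber : μ (T ⁻¹' {T x₀}) = μ (range x) := by
    refine measure_eq_of_subset_of_diff_atoms_null hcover
      (countable_preimage_singleton_inter_changePoints_union_pieces
        (fun k hk hkK => (hTmono k hk hkK).elim StrictMonoOn.injOn StrictAntiOn.injOn) _)
      (range_subset_iff.2 hTx) fun y hy => ?_
    by_contra hy₀
    obtain ⟨ℓ, rfl⟩ := hexact y (ENNReal.toReal_pos hy₀ (measure_ne_top _ _)) hy.1
    exact hy.2 ⟨ℓ, rfl⟩
  have hsum : ((P.map (fun ω => T (X ω))) {T x₀}).toReal = ∑ ℓ, (μ {x ℓ}).toReal := by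
    rw [hmap, Measure.map_apply_of_aemeasurable hT (measurableSet_singleton _), hfiber,
      ← ENNReal.toReal_sum fun ℓ _ => measure_ne_top _ _, ← image_univ, ← Finset.coe_univ,
      ← Finset.coe_image, ← sum_measure_singleton, Finset.sum_image hinj.injOn]
  refine ⟨hsum, fun ℓ u₁ hu₁ u₂ hu₂ => ?_⟩
  rw [wTransform_eq_of_mem_Ioo_jump _ _ hWg (hatom ℓ) hu₁,
    wTransform_eq_of_mem_Ioo_jump _ _ hWg (hatom ℓ) hu₂, hTx ℓ, distFun_sub_distFunLeft,
    distFun_sub_distFunLeft, hsum]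
  ring

/-- if `F_X` jumps at `x_0` then the generalised W-transform `𝒲_g` is
affine on `(F_X(x_0−), F_X(x_0))` with the stated intercept and, when `x_0, …, x_L`
are exactly the jump points mapped by `T` to `s = T(x_0)`, the jump of `F_{T(X)}` at
`s` is `Σ_ℓ P(X = x_ℓ)` and the slope on `(F_X(x_ℓ−), F_X(x_ℓ))` is
`(Σ_{ℓ'} P(X = x_{ℓ'}))/P(X = x_ℓ)`. -/
theorem generalised_w_transform_linear_on_jumps
    {Ω : Type*} [MeasurableSpace Ω] (P : Measure Ω) [IsProbabilityMeasure P]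
    (X : Ω → ℝ) (hX : Measurable X)
    (T : ℝ → ℝ)
    -- `T` is pcsm on the support of `F_X`
    (K : ℕ) (hK : 1 ≤ K) (t : ℕ → EReal)
    (ht : ∀ k : ℕ, k < K → t k < t (k + 1))
    (hTcont : ∀ k : ℕ, 1 ≤ k → k ≤ K → ContinuousOn T (pieceO t k))
    (hTmono : ∀ k : ℕ, 1 ≤ k → k ≤ K →
      StrictMonoOn T (pieceO t k) ∨ StrictAntiOn T (pieceO t k))
    (hsupp0 : sInf ((fun x : ℝ => (x : EReal)) '' suppSet (distFun (P.map X))) = t 0)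
    (hsuppK : sSup ((fun x : ℝ => (x : EReal)) '' suppSet (distFun (P.map X))) = t K)
    -- the generalised W-transform `𝒲_g` of `F_X` and `T`
    (Wg : ℝ → ℝ)
    (hWg : ∀ x : ℝ, ∀ v ∈ Set.Icc (0 : ℝ) 1, 0 < modDistFun (P.map X) x v →
      Wg (modDistFun (P.map X) x v)
        = modDistFun (P.map (fun ω => T (X ω))) (T x) v)
    -- `F_X` jumps at `x₀`
    (x₀ : ℝ) (hx₀ : 0 < ((P.map X) {x₀}).toReal) :
    -- `𝒲_g` is affine on `(F_X(x₀−), F_X(x₀))`, with the explicit formula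
    (∀ u ∈ Set.Ioo (distFunLeft (P.map X) x₀) (distFun (P.map X) x₀),
      Wg u = ((distFun (P.map (fun ω => T (X ω))) (T x₀)
                - distFunLeft (P.map (fun ω => T (X ω))) (T x₀))
              / (distFun (P.map X) x₀ - distFunLeft (P.map X) x₀))
            * (u - distFunLeft (P.map X) x₀)
          + distFunLeft (P.map (fun ω => T (X ω))) (T x₀)) ∧
    -- the multi-jump statement
    (∀ L : ℕ, ∀ x : Fin (L + 1) → ℝ, x 0 = x₀ → Function.Injective x →
      (∀ ℓ, 0 < ((P.map X) {x ℓ}).toReal) →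
      (∀ ℓ, T (x ℓ) = T x₀) →
      (∀ y : ℝ, 0 < ((P.map X) {y}).toReal → T y = T x₀ → ∃ ℓ, y = x ℓ) →
      (((P.map (fun ω => T (X ω))) {T x₀}).toReal
          = ∑ ℓ : Fin (L + 1), ((P.map X) {x ℓ}).toReal) ∧
      ∀ ℓ : Fin (L + 1),
        ∀ u₁ ∈ Set.Ioo (distFunLeft (P.map X) (x ℓ)) (distFun (P.map X) (x ℓ)),
        ∀ u₂ ∈ Set.Ioo (distFunLeft (P.map X) (x ℓ)) (distFun (P.map X) (x ℓ)),
          Wg u₂ - Wg u₁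
            = ((∑ ℓ' : Fin (L + 1), ((P.map X) {x ℓ'}).toReal)
                / ((P.map X) {x ℓ}).toReal) * (u₂ - u₁)) :=
  generalised_w_transform_linear_on_jumps_general P X hX T K t hTcont hTmono hsupp0 hsuppK Wg hWg x₀
    hx₀
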